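/- arXiv:1904.12479 — 2 statements merged into one kernel-verified Lean document; each statement's English description precedes it below -/
import Mathlib

section
/- Let v : ℤ → ℝ² be defined by v m = (m-1, -m) for m ≥ 0 and v m = (-m-1, m+2) for m < 0, and for m ∈ ℤ let K m = {a • v m + b • v (m+1) | a, b ≥ 0}. Then for every integer k > 0, the point (k, -k) does not belong to ⋃_{m ∈ ℤ} K m. -/
noncomputable def v (m : ℤ) : ℝ × ℝ :=
  if 0 ≤ m then ((m : ℝ) - 1, -(m : ℝ)) else (-(m : ℝ) - 1, (m : ℝ) + 2)

noncomputable def K (m : ℤ) : Set (ℝ × ℝ) :=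
  {x | ∃ a b : ℝ, 0 ≤ a ∧ 0 ≤ b ∧ x = a • v m + b • v (m + 1)}

/-!
Consecutive generators `v m`, `v (m + 1)` span a parallelogram of area `1`, so by Cramer's rule
`x ∈ K m` exactly when `cross x (v (m + 1)) ≥ 0` and `cross (v m) x ≥ 0`. For `x = (k, -k)` these
two numbers are `k * s (v (m + 1))` and `-k * s (v m)`, where `s w = w.1 + w.2` equals `-1` on
`v m` for `m ≥ 0` and `1` for `m < 0`. Hence `(k, -k) ∈ K m` would force both `m + 1 < 0` and
`0 ≤ m`.
-/

def cross (x y : ℝ × ℝ) : ℝ := x.1 * y.2 - x.2 * y.1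

lemma cross_smul_add_smul_left (a b : ℝ) (u w : ℝ × ℝ) :
    cross (a • u + b • w) w = a * cross u w := by
  simp only [cross, Prod.fst_add, Prod.snd_add, Prod.smul_fst, Prod.smul_snd, smul_eq_mul]
  ring

lemma cross_smul_add_smul_right (a b : ℝ) (u w : ℝ × ℝ) :
    cross u (a • u + b • w) = b * cross u w := by
  simp only [cross, Prod.fst_add, Prod.snd_add, Prod.smul_fst, Prod.smul_snd, smul_eq_mul]
  ring

lemma mem_cone_iff_of_cross_pos {u w x : ℝ × ℝ} (h : 0 < cross u w) :
    (∃ a b : ℝ, 0 ≤ a ∧ 0 ≤ b ∧ x = a • u + b • w) ↔ 0 ≤ cross x w ∧ 0 ≤ cross u x := by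
  constructor
  · rintro ⟨a, b, ha, hb, rfl⟩
    rw [cross_smul_add_smul_left, cross_smul_add_smul_right]
    exact ⟨mul_nonneg ha h.le, mul_nonneg hb h.le⟩
  · rintro ⟨ha, hb⟩
    refine ⟨cross x w / cross u w, cross u x / cross u w, by positivity, by positivity, ?_⟩
    have cramer : cross u w • x = cross x w • u + cross u x • w := by
      ext <;>
      · simp only [cross, Prod.fst_add, Prod.snd_add, Prod.smul_fst, Prod.smul_snd, smul_eq_mul]
        ring
    rw [div_eq_inv_mul, div_eq_inv_mul, mul_smul, mul_smul, ← smul_add, ← cramer, smul_smul,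
      inv_mul_cancel₀ h.ne', one_smul]

lemma cross_v_v_add_one (m : ℤ) : cross (v m) (v (m + 1)) = 1 := by
  rcases lt_trichotomy m (-1) with hm | rfl | hm
  · have h₀ : ¬ 0 ≤ m := by omega
    have h₁ : ¬ 0 ≤ m + 1 := by omega
    simp only [cross, v, h₀, h₁, if_false]
    push_cast
    ring
  · norm_num [cross, v]
  · have h₀ : 0 ≤ m := by omega
    have h₁ : 0 ≤ m + 1 := by omega
    simp only [cross, v, h₀, h₁, if_true]
    push_cast
    ring

lemma mem_K_iff {m : ℤ} {x : ℝ × ℝ} :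
    x ∈ K m ↔ 0 ≤ cross x (v (m + 1)) ∧ 0 ≤ cross (v m) x :=
  mem_cone_iff_of_cross_pos (by rw [cross_v_v_add_one]; exact one_pos)

lemma v_fst_add_snd (m : ℤ) : (v m).1 + (v m).2 = if 0 ≤ m then -1 else 1 := by
  unfold v
  split_ifs <;> ring

theorem stmt_2 (k : ℤ) (hk : 0 < k) :
    (((k : ℝ), -(k : ℝ)) : ℝ × ℝ) ∉ ⋃ m : ℤ, K m := by
  simp only [Set.mem_iUnion, not_exists]
  intro m hm
  obtain ⟨hw, hu⟩ := mem_K_iff.mp hm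
  have hk' : (0 : ℝ) < k := by exact_mod_cast hk
  have hw' : cross ((k : ℝ), -(k : ℝ)) (v (m + 1)) = k * ((v (m + 1)).1 + (v (m + 1)).2) := by
    simp only [cross]; ring
  have hu' : cross (v m) ((k : ℝ), -(k : ℝ)) = -(k * ((v m).1 + (v m).2)) := by
    simp only [cross]; ring
  rw [hw', v_fst_add_snd] at hw
  rw [hu', v_fst_add_snd] at hu
  by_cases hm₁ : 0 ≤ m + 1
  · simp only [hm₁, if_true] at hw
    linarith
  · have hm₀ : ¬ 0 ≤ m := by omega
    simp only [hm₀, if_false] at hu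
    linarith
end

section
/- Let v : ℤ → ℝ² and K m be as follows: v m = (m-1, -m) for m ≥ 0, v m = (-m-1, m+2) for m < 0, and K m = {a • v m + b • v (m+1) | a, b ≥ 0}. Then every pair of integers (a, b) ∈ ℤ² satisfying ¬(a > 0 ∧ b = -a) lies in ⋃_{m ∈ ℤ} K m. Moreover, the closure of ⋃_{m ∈ ℤ} K m equals all of ℝ². -/
lemma v_of_nonneg {m : ℤ} (h : 0 ≤ m) : v m = ((m : ℝ) - 1, -(m : ℝ)) := if_pos h

lemma v_of_neg {m : ℤ} (h : m < 0) : v m = (-(m : ℝ) - 1, (m : ℝ) + 2) := if_neg (not_le.2 h)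

lemma mem_K_neg_one {x y : ℝ} (hx : x ≤ 0) (hy : 0 ≤ y) : (x, y) ∈ K (-1) := by
  refine ⟨y, -x, hy, neg_nonneg.2 hx, ?_⟩
  rw [neg_add_cancel, v_of_neg (by norm_num), v_of_nonneg le_rfl]
  ext <;> norm_num

lemma mem_K_of_nonneg {m : ℤ} (hm : 0 ≤ m) {x y : ℝ}
    (h₁ : (m - 1) * -(x + y) ≤ x) (h₂ : x ≤ m * -(x + y)) : (x, y) ∈ K m := by
  refine ⟨m * -(x + y) - x, x - (m - 1) * -(x + y), by linarith, by linarith, ?_⟩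
  rw [v_of_nonneg hm, v_of_nonneg (by omega)]
  ext <;> simp <;> ring

lemma mem_K_neg_sub_two {n : ℤ} (hn : 0 ≤ n) {x y : ℝ}
    (h₁ : -y ≤ n * (x + y)) (h₂ : n * (x + y) ≤ x) : (x, y) ∈ K (-n - 2) := by
  refine ⟨x - n * (x + y), y + n * (x + y), by linarith, by linarith, ?_⟩
  rw [v_of_neg (by omega), v_of_neg (by omega)]
  ext <;> simp <;> ring

lemma exists_int_mul_le_lt_add_one_mul (r : ℝ) {s : ℝ} (hs : 0 < s) :
    ∃ n : ℤ, n * s ≤ r ∧ r < (n + 1) * s := by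
  simpa only [zsmul_eq_mul, Int.cast_add, Int.cast_one] using
    (existsUnique_zsmul_near_of_pos hs r).exists

lemma mem_iUnion_K_of_nonpos_of_add_neg {x y : ℝ} (hy : y ≤ 0) (hxy : x + y < 0) :
    (x, y) ∈ ⋃ m, K m := by
  obtain ⟨n, hn₁, hn₂⟩ := exists_int_mul_le_lt_add_one_mul x (neg_pos.2 hxy)
  have hn : (-2 : ℝ) < n := by nlinarith
  refine Set.mem_iUnion.2
    ⟨n + 1, mem_K_of_nonneg ?_ (by push_cast; linarith) (by push_cast; linarith)⟩
  have : (-2 : ℤ) < n := by exact_mod_cast hn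
  omega

lemma mem_iUnion_K_of_nonneg_of_add_pos {x y : ℝ} (hx : 0 ≤ x) (hxy : 0 < x + y) :
    (x, y) ∈ ⋃ m, K m := by
  obtain ⟨n, hn₁, hn₂⟩ := exists_int_mul_le_lt_add_one_mul x hxy
  have hn : (-1 : ℝ) < n := by nlinarith
  refine Set.mem_iUnion.2 ⟨-n - 2, mem_K_neg_sub_two ?_ (by linarith) hn₁⟩
  have : (-1 : ℤ) < n := by exact_mod_cast hn
  omega

lemma mem_iUnion_K {x y : ℝ} (h : ¬(0 < x ∧ y = -x)) : (x, y) ∈ ⋃ m, K m := by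
  rcases le_or_gt x 0 with hx | hx
  · rcases le_or_gt 0 y with hy | hy
    · exact Set.mem_iUnion.2 ⟨-1, mem_K_neg_one hx hy⟩
    · exact mem_iUnion_K_of_nonpos_of_add_neg hy.le (by linarith)
  · rcases lt_trichotomy (x + y) 0 with hxy | hxy | hxy
    · exact mem_iUnion_K_of_nonpos_of_add_neg (by linarith) hxy
    · exact absurd ⟨hx, by linarith⟩ h
    · exact mem_iUnion_K_of_nonneg_of_add_pos hx.le hxy

theorem stmt_3 :
    (∀ a b : ℤ, ¬(0 < a ∧ b = -a) →
      (((a : ℝ), (b : ℝ)) : ℝ × ℝ) ∈ ⋃ m : ℤ, K m) ∧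
    closure (⋃ m : ℤ, K m) = (Set.univ : Set (ℝ × ℝ)) := by
  refine ⟨fun a b hab => mem_iUnion_K fun h =>
      hab ⟨by exact_mod_cast h.1, by exact_mod_cast h.2⟩,
    Set.eq_univ_of_forall fun p => ?_⟩
  have hdense : p.1 ∈ closure {t : ℝ | t ≠ -p.2} := (dense_compl_singleton (-p.2)) p.1
  exact map_mem_closure (Continuous.prodMk_left p.2) hdense
    fun t ht => mem_iUnion_K fun h => ht (by linarith [h.2])
end
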